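/- (Proposition 1, Non-degenerate Covariance Matrix.) Let p_1,…,p_n ∈ ℝ³ be points with unit normals n_1,…,n_n ∈ ℝ³ (‖n_j‖ = 1), fix an index i and a nonempty finite neighborhood N_i ⊆ {1,…,n}, and for thresholds a ∈ [0,π], b ∈ [a,π] define weights w_{ij} = sig^cos_{a,b}(∠(n_i,n_j)) where ∠(n_i,n_j) = arccos⟨n_i,n_j⟩, the barycenter p̄_i = (1/|N_i|)·Σ_{j∈N_i} p_j, and the weighted covariance matrix C_i = Σ_{j∈N_i} w_{ij}·(p_j − p̄_i)(p_j − p̄_i)ᵀ. Suppose there exist ℓ₁, ℓ₂ ∈ N_i with ℓ₁ ≠ ℓ₂, p_{ℓ₁} ≠ p_{ℓ₂}, n_{ℓ₁} ≠ −n_i, and n_{ℓ₂} ≠ −n_i. Then for every a ∈ [0,π] there exists b ∈ [a,π] (namely b = π) such that the trace of C_i, i.e., the sum of its eigenvalues, is strictly positive. -/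

import Mathlib

/-!
Take `b = π`. The cosine ramp of `sig^cos_{a,π}` only reaches `0` at `π`, so the weight of `j` is
positive as soon as `n_j ≠ -n_i`. The trace of `C_i` is `∑ w_{ij} ‖p_j - p̄_i‖²`, a sum of
nonnegative terms, and of the two distinct points `p_{ℓ₁}, p_{ℓ₂}` at least one differs from `p̄_i`.
-/

open RealInnerProductSpace

/-- The cosine-sigmoid weighting function `sig^cos_{a,b} : [0,π] → [0,1]`:
`1` on `[0,a)`, the cosine interpolation on `[a,b]` (when `a < b`),
and `0` on `(b,π]`; when `a = b` it is `1` for `x < a` and `0` for `x ≥ a`. -/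
noncomputable def sigCos (a b x : ℝ) : ℝ :=
  if x < a then 1
  else if a < b ∧ x ≤ b then (1 / 2) * Real.cos (Real.pi * (x - a) / (b - a)) + 1 / 2
  else 0

/-- The barycenter `p̄ = (1/|N|)·Σ_{j∈N} p j` of the points indexed by `N`. -/
noncomputable def barycenter {n : ℕ} (p : Fin n → EuclideanSpace ℝ (Fin 3))
    (N : Finset (Fin n)) : EuclideanSpace ℝ (Fin 3) :=
  (N.card : ℝ)⁻¹ • ∑ j ∈ N, p j

/-- The weighted covariance matrix `C = Σ_{j∈N} w j · (p j − p̄)(p j − p̄)ᵀ`. -/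
noncomputable def covMatrix {n : ℕ} (p : Fin n → EuclideanSpace ℝ (Fin 3))
    (N : Finset (Fin n)) (w : Fin n → ℝ) : Matrix (Fin 3) (Fin 3) ℝ :=
  ∑ j ∈ N, w j • Matrix.vecMulVec (p j - barycenter p N) (p j - barycenter p N)

section Weights

open Real

lemma sigCos_nonneg (a b x : ℝ) : 0 ≤ sigCos a b x := by
  unfold sigCos
  split_ifs
  · exact zero_le_one
  · nlinarith [neg_one_le_cos (π * (x - a) / (b - a))]
  · exact le_rfl

lemma sigCos_pos_of_lt {a b x : ℝ} (hxb : x < b) : 0 < sigCos a b x := by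
  unfold sigCos
  split_ifs with hxa hab
  · exact zero_lt_one
  · have hba : 0 < b - a := by linarith
    have harg_nonneg : 0 ≤ π * (x - a) / (b - a) := by
      have : 0 ≤ x - a := by linarith
      positivity
    have harg_lt : π * (x - a) / (b - a) < π := by
      rw [div_lt_iff₀ hba]
      nlinarith [pi_pos]
    have := cos_lt_cos_of_nonneg_of_le_pi harg_nonneg le_rfl harg_lt
    rw [cos_pi] at this
    linarith
  · exact absurd ⟨by linarith, hxb.le⟩ hab

lemma arccos_inner_lt_pi {E : Type*} [NormedAddCommGroup E] [InnerProductSpace ℝ E] {u v : E}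
    (hu : ‖u‖ = 1) (hv : ‖v‖ = 1) (huv : v ≠ -u) : arccos ⟪u, v⟫ < π := by
  rw [arccos_lt_pi]
  refine (neg_one_le_real_inner_of_norm_eq_one hu hv).lt_of_ne fun h => huv ?_
  exact (inner_eq_neg_one_iff_of_norm_eq_one hv hu).mp (real_inner_comm u v ▸ h.symm)

end Weights

section Covariance

variable {n : ℕ} (p : Fin n → EuclideanSpace ℝ (Fin 3)) (N : Finset (Fin n)) (w : Fin n → ℝ)

lemma trace_covMatrix :
    (covMatrix p N w).trace = ∑ j ∈ N, w j * ‖p j - barycenter p N‖ ^ 2 := by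
  simp only [covMatrix, Matrix.trace_sum, Matrix.trace_smul, Matrix.trace_vecMulVec, smul_eq_mul,
    EuclideanSpace.real_norm_sq_eq]
  simp only [dotProduct, sq]

variable {p N w}

lemma trace_covMatrix_pos (hw : ∀ j ∈ N, 0 ≤ w j) {ℓ : Fin n} (hℓ : ℓ ∈ N) (hwℓ : 0 < w ℓ)
    (hpℓ : p ℓ ≠ barycenter p N) : 0 < (covMatrix p N w).trace := by
  rw [trace_covMatrix]
  refine Finset.sum_pos' (fun j hj => mul_nonneg (hw j hj) (sq_nonneg _)) ⟨ℓ, hℓ, ?_⟩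
  exact mul_pos hwℓ (pow_pos (norm_pos_iff.mpr (sub_ne_zero.mpr hpℓ)) 2)

end Covariance

theorem stmt_6_general (n : ℕ) (p : Fin n → EuclideanSpace ℝ (Fin 3))
    (nrm : Fin n → EuclideanSpace ℝ (Fin 3)) (hnrm : ∀ j, ‖nrm j‖ = 1)
    (i : Fin n) (N : Finset (Fin n))
    (ℓ₁ ℓ₂ : Fin n) (hℓ₁ : ℓ₁ ∈ N) (hℓ₂ : ℓ₂ ∈ N)
    (hpne : p ℓ₁ ≠ p ℓ₂)
    (hn₁ : nrm ℓ₁ ≠ -nrm i) (hn₂ : nrm ℓ₂ ≠ -nrm i)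
    (a : ℝ) (ha : a ∈ Set.Icc 0 Real.pi) :
    ∃ b ∈ Set.Icc a Real.pi,
      0 < Matrix.trace
        (covMatrix p N (fun j => sigCos a b (Real.arccos ⟪nrm i, nrm j⟫))) := by
  refine ⟨Real.pi, ⟨ha.2, le_rfl⟩, ?_⟩
  -- two distinct points cannot both coincide with the barycenter
  obtain ⟨ℓ, hℓ, hnℓ, hpℓ⟩ : ∃ ℓ ∈ N, nrm ℓ ≠ -nrm i ∧ p ℓ ≠ barycenter p N := by
    by_cases h : p ℓ₁ = barycenter p N
    · exact ⟨ℓ₂, hℓ₂, hn₂, fun h₂ => hpne (h.trans h₂.symm)⟩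
    · exact ⟨ℓ₁, hℓ₁, hn₁, h⟩
  exact trace_covMatrix_pos (fun j _ => sigCos_nonneg _ _ _) hℓ
    (sigCos_pos_of_lt (arccos_inner_lt_pi (hnrm i) (hnrm ℓ) hnℓ)) hpℓ

/-- Proposition 1 (Non-degenerate Covariance Matrix). -/
theorem stmt_6 (n : ℕ) (p : Fin n → EuclideanSpace ℝ (Fin 3))
    (nrm : Fin n → EuclideanSpace ℝ (Fin 3)) (hnrm : ∀ j, ‖nrm j‖ = 1)
    (i : Fin n) (N : Finset (Fin n)) (hN : N.Nonempty)
    (ℓ₁ ℓ₂ : Fin n) (hℓ₁ : ℓ₁ ∈ N) (hℓ₂ : ℓ₂ ∈ N) (hℓne : ℓ₁ ≠ ℓ₂)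
    (hpne : p ℓ₁ ≠ p ℓ₂)
    (hn₁ : nrm ℓ₁ ≠ -nrm i) (hn₂ : nrm ℓ₂ ≠ -nrm i)
    (a : ℝ) (ha : a ∈ Set.Icc 0 Real.pi) :
    ∃ b ∈ Set.Icc a Real.pi,
      0 < Matrix.trace
        (covMatrix p N (fun j => sigCos a b (Real.arccos ⟪nrm i, nrm j⟫))) :=
  stmt_6_general n p nrm hnrm i N ℓ₁ ℓ₂ hℓ₁ hℓ₂ hpne hn₁ hn₂ a ha
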